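/- arXiv:2507.05923 — 4 statements merged into one kernel-verified Lean document; each statement's English description precedes it below -/
import Mathlib

section
/- Let g : (0,∞) → ℝ be C², with g(r) = −ln(r)/(2π) for all r ≥ 1, such that G(x) := g(|x|) extends to a C² function on ℝ² (in particular r g'(r) → 0 as r → 0⁺). Then π ∫_{ℝ²} (−ΔG)(x) · (x · ∇G(x)) dx = −1/4. -/
/-!
For `G x = g ‖x‖` and `r = ‖x‖` one has `x · ∇G(x) = r g'(r)` and `r ΔG(x) = g' + r g'' = (r g')'`.
In polar coordinates the integral is therefore `-2π² ∫₀^∞ (r g')' (r g') dr = -π² [(r g')²]₀^∞`.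
Since `G` is `C¹`, `r g'(r) = x · ∇G(x)` tends to `0` as `r → 0`, while `r g'(r) = -1/(2π)` for
`r > 1`; hence the value `-π² / (4π²) = -1/4`.
-/

open Real MeasureTheory

/-- The Laplacian on `ℝ²` as the sum of the two repeated directional derivatives. -/
noncomputable def lap (G : EuclideanSpace ℝ (Fin 2) → ℝ) (x : EuclideanSpace ℝ (Fin 2)) : ℝ :=
  ∑ i : Fin 2,
    fderiv ℝ (fun y => fderiv ℝ G y (EuclideanSpace.single i (1:ℝ))) x
      (EuclideanSpace.single i (1:ℝ))

open Set Filter Topology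
open scoped RealInnerProductSpace

section RadialFunction

variable {E : Type*} [NormedAddCommGroup E] [InnerProductSpace ℝ E] {g : ℝ → ℝ} {x : E}

theorem hasFDerivAt_norm_of_ne_zero (hx : x ≠ 0) :
    HasFDerivAt (fun y : E => ‖y‖) (‖x‖⁻¹ • innerSL ℝ x) x := by
  have h := (hasDerivAt_sqrt (pow_pos (norm_pos_iff.2 hx) 2).ne').comp_hasFDerivAt x
    (hasStrictFDerivAt_norm_sq x).hasFDerivAt
  simp only [Function.comp_def, sqrt_sq (norm_nonneg _)] at h
  refine h.congr_fderiv ?_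
  ext v
  simp only [smul_apply, innerSL_apply_apply, smul_eq_mul, nsmul_eq_mul, Nat.cast_ofNat]
  field_simp

theorem HasDerivAt.hasFDerivAt_comp_norm {g' : ℝ} (hg : HasDerivAt g g' ‖x‖) (hx : x ≠ 0) :
    HasFDerivAt (fun y => g ‖y‖) ((g' / ‖x‖) • innerSL ℝ x) x := by
  have h := hg.comp_hasFDerivAt x (hasFDerivAt_norm_of_ne_zero hx)
  rwa [smul_smul, ← div_eq_mul_inv] at h

theorem fderiv_comp_norm_apply (hg : DifferentiableAt ℝ g ‖x‖) (hx : x ≠ 0) (v : E) :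
    fderiv ℝ (fun y => g ‖y‖) x v = deriv g ‖x‖ / ‖x‖ * ⟪x, v⟫ := by
  simp [(hg.hasDerivAt.hasFDerivAt_comp_norm hx).fderiv]

theorem fderiv_comp_norm_apply_self (hg : DifferentiableAt ℝ g ‖x‖) (hx : x ≠ 0) :
    fderiv ℝ (fun y => g ‖y‖) x x = ‖x‖ * deriv g ‖x‖ := by
  rw [fderiv_comp_norm_apply hg hx, real_inner_self_eq_norm_sq]
  field_simp [norm_ne_zero_iff.2 hx]

theorem fderiv_fderiv_comp_norm_apply (hg : ContDiffOn ℝ 2 g (Ioi 0)) (hx : x ≠ 0) (v : E) :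
    fderiv ℝ (fun y => fderiv ℝ (fun z => g ‖z‖) y v) x v =
      deriv (deriv g) ‖x‖ * (⟪x, v⟫ / ‖x‖) ^ 2
        + deriv g ‖x‖ * (‖v‖ ^ 2 / ‖x‖ - ⟪x, v⟫ ^ 2 / ‖x‖ ^ 3) := by
  have hr : 0 < ‖x‖ := norm_pos_iff.2 hx
  have hg' : ContDiffOn ℝ 1 (deriv g) (Ioi 0) := hg.deriv_of_isOpen isOpen_Ioi (by norm_num)
  have hφ : HasDerivAt (fun r => deriv g r / r)
      ((deriv (deriv g) ‖x‖ * ‖x‖ - deriv g ‖x‖) / ‖x‖ ^ 2) ‖x‖ := by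
    refine (((hg'.differentiableOn one_ne_zero).differentiableAt
      (Ioi_mem_nhds hr)).hasDerivAt.div (hasDerivAt_id' _) hr.ne').congr_deriv ?_
    rw [mul_one]
  have hdir : (fun y => fderiv ℝ (fun z => g ‖z‖) y v)
      =ᶠ[𝓝 x] fun y => deriv g ‖y‖ / ‖y‖ * innerSL ℝ v y := by
    filter_upwards [isOpen_compl_singleton.mem_nhds hx] with y hy
    have hy : 0 < ‖y‖ := norm_pos_iff.2 hy
    rw [fderiv_comp_norm_apply ((hg.differentiableOn (by norm_num)).differentiableAt
      (Ioi_mem_nhds hy)) (norm_pos_iff.1 hy), innerSL_apply_apply, real_inner_comm]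
  have hD : HasFDerivAt (fun y => deriv g ‖y‖ / ‖y‖ * innerSL ℝ v y) _ x :=
    (hφ.hasFDerivAt_comp_norm hx).mul (innerSL ℝ v).hasFDerivAt
  rw [hdir.fderiv_eq, hD.fderiv]
  simp only [add_apply, smul_apply, innerSL_apply_apply,
    smul_eq_mul, real_inner_self_eq_norm_sq, real_inner_comm v x]
  field_simp
  ring

theorem contDiffOn_Ioi_of_contDiff_comp_norm [Nontrivial E] {n : WithTop ℕ∞}
    (hG : ContDiff ℝ n fun x : E => g ‖x‖) : ContDiffOn ℝ n g (Ioi 0) := by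
  obtain ⟨e, he⟩ := exists_norm_eq E zero_le_one
  refine (hG.comp (contDiff_id.smul (contDiff_const (c := e)))).contDiffOn.congr fun r hr => ?_
  simp [norm_smul, he, abs_of_pos (show 0 < r from hr)]

end RadialFunction

local notation "ℝ²" => EuclideanSpace ℝ (Fin 2)

section Plane

variable {g : ℝ → ℝ}

theorem lap_comp_norm (hg : ContDiffOn ℝ 2 g (Ioi 0)) {x : ℝ²} (hx : x ≠ 0) :
    lap (fun y => g ‖y‖) x = deriv (deriv g) ‖x‖ + deriv g ‖x‖ / ‖x‖ := by
  have hr : 0 < ‖x‖ := norm_pos_iff.2 hx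
  have hparseval : ∑ i : Fin 2, ⟪x, EuclideanSpace.single i (1 : ℝ)⟫ ^ 2 = ‖x‖ ^ 2 := by
    simpa [EuclideanSpace.basisFun_apply, real_inner_comm] using
      (EuclideanSpace.basisFun (Fin 2) ℝ).sum_sq_norm_inner_right x
  simp only [lap, fderiv_fderiv_comp_norm_apply hg hx, PiLp.norm_single, norm_one]
  rw [Fin.sum_univ_two] at hparseval ⊢
  field_simp
  linear_combination (deriv (deriv g) ‖x‖ * ‖x‖ - deriv g ‖x‖) * hparseval

theorem continuous_lap {G : ℝ² → ℝ} (hG : ContDiff ℝ 2 G) : Continuous (lap G) := by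
  refine continuous_finsetSum _ fun i _ => ?_
  have h : ContDiff ℝ 1 fun y => fderiv ℝ G y (EuclideanSpace.single i (1 : ℝ)) :=
    (ContinuousLinearMap.apply ℝ ℝ (EuclideanSpace.single i (1 : ℝ))).contDiff.comp
      (hG.fderiv_right (by norm_num))
  exact (h.continuous_fderiv one_ne_zero).clm_apply continuous_const

theorem integral_comp_norm_fin_two (f : ℝ → ℝ) :
    ∫ x : ℝ², f ‖x‖ = 2 * π * ∫ r in Ioi 0, r * f r := by
  rw [integral_fun_norm_addHaar, finrank_euclideanSpace_fin, measureReal_def,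
    EuclideanSpace.volume_ball_fin_two]
  simp [pi_nonneg, mul_assoc]

end Plane

theorem Continuous.integrableOn_Ioi_of_eqOn_zero {F : Type*} [NormedAddCommGroup F] {f : ℝ → F}
    (hf : Continuous f) {a b : ℝ} (h : EqOn f 0 (Ioi b)) : IntegrableOn f (Ioi a) :=
  (hf.integrableOn_Ioc.union ((integrableOn_congr_fun h measurableSet_Ioi).2 integrableOn_zero))
    |>.mono_set Ioi_subset_Ioc_union_Ioi

theorem integral_Ioi_deriv_mul_self {u u' : ℝ → ℝ} {a c : ℝ}
    (hcont : ContinuousWithinAt u (Ici a) a) (hderiv : ∀ r ∈ Ioi a, HasDerivAt u (u' r) r)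
    (hint : IntegrableOn (fun r => u' r * u r) (Ioi a)) (hlim : Tendsto u atTop (𝓝 c)) :
    ∫ r in Ioi a, u' r * u r = (c ^ 2 - u a ^ 2) / 2 := by
  rw [integral_Ioi_of_hasDerivAt_of_tendsto (f := fun r => u r ^ 2 / 2) ((hcont.pow 2).div_const 2)
    (fun r hr => (((hderiv r hr).pow 2).div_const 2).congr_deriv (by push_cast; ring)) hint
    ((hlim.pow 2).div_const 2)]
  ring

section GreenFunction

variable {g : ℝ → ℝ} (hout : ∀ r : ℝ, 1 ≤ r → g r = -log r / (2 * π))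
include hout

theorem deriv_eventuallyEq_of_eq_neg_log {r : ℝ} (hr : 1 < r) :
    deriv g =ᶠ[𝓝 r] fun s => -s⁻¹ / (2 * π) := by
  have hg : g =ᶠ[𝓝 r] fun s => -log s / (2 * π) :=
    eventually_of_mem (Ioi_mem_nhds hr) fun s hs => hout s (le_of_lt hs)
  refine hg.deriv.trans (EventuallyEq.of_eq ?_)
  ext s
  rw [deriv_div_const, deriv.fun_neg, deriv_log]

theorem deriv_deriv_of_eq_neg_log {r : ℝ} (hr : 1 < r) :
    deriv (deriv g) r = (r ^ 2)⁻¹ / (2 * π) := by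
  rw [(deriv_eventuallyEq_of_eq_neg_log hout hr).deriv_eq, deriv_div_const, deriv.fun_neg,
    deriv_inv, neg_neg]

theorem lap_comp_norm_eq_zero_of_eq_neg_log (hg : ContDiffOn ℝ 2 g (Ioi 0)) {x : ℝ²}
    (hx : 1 < ‖x‖) : lap (fun y => g ‖y‖) x = 0 := by
  rw [lap_comp_norm hg (norm_pos_iff.1 (by linarith)), deriv_deriv_of_eq_neg_log hout hx,
    (deriv_eventuallyEq_of_eq_neg_log hout hx).eq_of_nhds]
  field_simp
  ring

theorem fderiv_comp_norm_apply_self_of_eq_neg_log (hg : ContDiffOn ℝ 2 g (Ioi 0)) {x : ℝ²}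
    (hx : 1 < ‖x‖) : fderiv ℝ (fun y => g ‖y‖) x x = -(2 * π)⁻¹ := by
  have hr : 0 < ‖x‖ := by linarith
  rw [fderiv_comp_norm_apply_self ((hg.differentiableOn (by norm_num)).differentiableAt
    (Ioi_mem_nhds hr)) (norm_pos_iff.1 hr), (deriv_eventuallyEq_of_eq_neg_log hout hx).eq_of_nhds]
  field_simp

end GreenFunction

theorem norm_norm_smul_of_norm_eq_one {E : Type*} [SeminormedAddCommGroup E] [NormedSpace ℝ E]
    {e : E} (he : ‖e‖ = 1) (x : E) : ‖‖x‖ • e‖ = ‖x‖ := by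
  rw [norm_smul, norm_norm, he, mul_one]

section RadialProfile

variable {g : ℝ → ℝ} (hg : ContDiffOn ℝ 2 g (Ioi 0)) {e : ℝ²} (he : ‖e‖ = 1)
include hg he

theorem lap_comp_norm_norm_smul (x : ℝ²) :
    lap (fun y => g ‖y‖) (‖x‖ • e) = lap (fun y => g ‖y‖) x := by
  rcases eq_or_ne x 0 with rfl | hx
  · simp
  have hxe : ‖x‖ • e ≠ 0 := norm_ne_zero_iff.1 <| by
    rw [norm_norm_smul_of_norm_eq_one he]; exact norm_ne_zero_iff.2 hx
  rw [lap_comp_norm hg hx, lap_comp_norm hg hxe, norm_norm_smul_of_norm_eq_one he]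

theorem fderiv_comp_norm_norm_smul_apply_self (x : ℝ²) :
    fderiv ℝ (fun y => g ‖y‖) (‖x‖ • e) (‖x‖ • e) = fderiv ℝ (fun y => g ‖y‖) x x := by
  rcases eq_or_ne x 0 with rfl | hx
  · simp
  have hxe : ‖x‖ • e ≠ 0 := norm_ne_zero_iff.1 <| by
    rw [norm_norm_smul_of_norm_eq_one he]; exact norm_ne_zero_iff.2 hx
  have hdiff : DifferentiableAt ℝ g ‖x‖ :=
    (hg.differentiableOn (by norm_num)).differentiableAt (Ioi_mem_nhds (norm_pos_iff.2 hx))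
  have hdiff' : DifferentiableAt ℝ g ‖‖x‖ • e‖ := by rwa [norm_norm_smul_of_norm_eq_one he]
  rw [fderiv_comp_norm_apply_self hdiff hx, fderiv_comp_norm_apply_self hdiff' hxe,
    norm_norm_smul_of_norm_eq_one he]

/-- Along a ray, `(x · ∇G)(r e) = r g'(r)`, whose derivative `g' + r g''` is `r ΔG(r e)`. -/
theorem hasDerivAt_fderiv_comp_norm_smul_apply_self {r : ℝ} (hr : 0 < r) :
    HasDerivAt (fun s : ℝ => fderiv ℝ (fun y => g ‖y‖) (s • e) (s • e))
      (r * lap (fun y => g ‖y‖) (r • e)) r := by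
  have hnorm : ∀ s : ℝ, 0 < s → ‖s • e‖ = s := fun s hs => by
    rw [norm_smul_of_nonneg hs.le, he, mul_one]
  have hne : ∀ s : ℝ, 0 < s → s • e ≠ 0 := fun s hs =>
    norm_ne_zero_iff.1 ((hnorm s hs).symm ▸ hs.ne')
  have hflux : (fun s : ℝ => fderiv ℝ (fun y => g ‖y‖) (s • e) (s • e))
      =ᶠ[𝓝 r] fun s => s * deriv g s := by
    filter_upwards [Ioi_mem_nhds hr] with s hs
    have hdiff : DifferentiableAt ℝ g ‖s • e‖ := by
      rw [hnorm s hs]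
      exact (hg.differentiableOn (by norm_num)).differentiableAt (Ioi_mem_nhds hs)
    rw [fderiv_comp_norm_apply_self hdiff (hne s hs), hnorm s hs]
  have hg' : HasDerivAt (deriv g) (deriv (deriv g) r) r :=
    (((hg.deriv_of_isOpen isOpen_Ioi (by norm_num)).differentiableOn one_ne_zero).differentiableAt
      (Ioi_mem_nhds hr)).hasDerivAt
  refine (((hasDerivAt_id' r).mul hg').congr_of_eventuallyEq hflux).congr_deriv ?_
  rw [lap_comp_norm hg (hne r hr), hnorm r hr]
  field_simp
  ring

end RadialProfile

theorem integral_Ioi_mul_lap_mul_fderiv_comp_norm {g : ℝ → ℝ}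
    (hout : ∀ r : ℝ, 1 ≤ r → g r = -log r / (2 * π)) (hG : ContDiff ℝ 2 fun x : ℝ² => g ‖x‖)
    {e : ℝ²} (he : ‖e‖ = 1) :
    ∫ r in Ioi 0, r * lap (fun y => g ‖y‖) (r • e) * fderiv ℝ (fun y => g ‖y‖) (r • e) (r • e)
      = (2 * π)⁻¹ ^ 2 / 2 := by
  have hg : ContDiffOn ℝ 2 g (Ioi 0) := contDiffOn_Ioi_of_contDiff_comp_norm hG
  -- `(x · ∇G)(r e)` rather than `r g'(r)`: continuity at `r = 0` then comes from `hG`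
  set u : ℝ → ℝ := fun r => fderiv ℝ (fun y => g ‖y‖) (r • e) (r • e)
  have hsmul : Continuous fun r : ℝ => r • e := continuous_id.smul continuous_const
  have hu : Continuous u := ((hG.continuous_fderiv (by norm_num)).comp hsmul).clm_apply hsmul
  have hnorm : ∀ r : ℝ, 1 < r → 1 < ‖r • e‖ := fun r hr => by
    rwa [norm_smul_of_nonneg (by linarith), he, mul_one]
  have hint : IntegrableOn (fun r => r * lap (fun y => g ‖y‖) (r • e) * u r) (Ioi 0) :=
    ((continuous_id.mul ((continuous_lap hG).comp hsmul)).mul hu).integrableOn_Ioi_of_eqOn_zero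
      (b := 1) fun r hr => by simp [lap_comp_norm_eq_zero_of_eq_neg_log hout hg (hnorm r hr)]
  have hlim : Tendsto u atTop (𝓝 (-(2 * π)⁻¹)) :=
    tendsto_const_nhds.congr' <| (eventually_gt_atTop 1).mono fun r hr =>
      (fderiv_comp_norm_apply_self_of_eq_neg_log hout hg (hnorm r hr)).symm
  change ∫ r in Ioi 0, r * lap (fun y => g ‖y‖) (r • e) * u r = _
  rw [integral_Ioi_deriv_mul_self hu.continuousWithinAt
    (fun r hr => hasDerivAt_fderiv_comp_norm_smul_apply_self hg he hr) hint hlim]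
  simp [u]

theorem stmt_9_general (g : ℝ → ℝ)
    (hout : ∀ r : ℝ, 1 ≤ r → g r = - Real.log r / (2 * π))
    (G : EuclideanSpace ℝ (Fin 2) → ℝ)
    (hGdef : ∀ x, G x = g ‖x‖)
    (hG : ContDiff ℝ 2 G) :
    π * ∫ x : EuclideanSpace ℝ (Fin 2), (-(lap G x)) * (fderiv ℝ G x x) = -1/4 := by
  obtain rfl : G = fun x => g ‖x‖ := funext hGdef
  have hg : ContDiffOn ℝ 2 g (Ioi 0) := contDiffOn_Ioi_of_contDiff_comp_norm hG
  set e : ℝ² := EuclideanSpace.single 0 1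
  have he : ‖e‖ = 1 := by simp [e]
  set F : ℝ → ℝ := fun r =>
    -lap (fun y => g ‖y‖) (r • e) * fderiv ℝ (fun y => g ‖y‖) (r • e) (r • e) with hF
  have hradial : ∀ x : ℝ², -lap (fun y => g ‖y‖) x * fderiv ℝ (fun y => g ‖y‖) x x = F ‖x‖ :=
    fun x => by
      simp only [hF, lap_comp_norm_norm_smul hg he, fderiv_comp_norm_norm_smul_apply_self hg he]
  simp_rw [hradial]
  rw [integral_comp_norm_fin_two]
  simp only [hF, neg_mul, mul_neg, ← mul_assoc, integral_neg]
  rw [integral_Ioi_mul_lap_mul_fderiv_comp_norm hout hG he]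
  field_simp
  ring

/-- For a radial C² deformation `G` of the free Green's function agreeing with
`−ln r/(2π)` for `r ≥ 1`, one has `π ∫ (−ΔG)(x) (x·∇G(x)) dx = −1/4`. -/
theorem stmt_9 (g : ℝ → ℝ)
    (hg : ContDiffOn ℝ 2 g (Set.Ioi (0:ℝ)))
    (hout : ∀ r : ℝ, 1 ≤ r → g r = - Real.log r / (2 * π))
    (G : EuclideanSpace ℝ (Fin 2) → ℝ)
    (hGdef : ∀ x, G x = g ‖x‖)
    (hG : ContDiff ℝ 2 G) :
    π * ∫ x : EuclideanSpace ℝ (Fin 2), (-(lap G x)) * (fderiv ℝ G x x) = -1/4 :=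
  stmt_9_general g hout G hGdef hG
end

section
/- The integral ∫_0^N s J₁(s)² ds tends to +∞ as N → ∞, where J₁ is the Bessel function of the first kind of order 1. -/
open Real MeasureTheory Filter

/-- The Bessel function of the first kind of order 1. -/
noncomputable def besselJ1 (t : ℝ) : ℝ :=
  (1 / π) * ∫ θ in (0:ℝ)..π, Real.cos (θ - t * Real.sin θ)

/-
`u(s) = √s J₁(s)` solves the Liouville normal form `u'' + (1 - 3/(4s²)) u = 0` of Bessel's
equation, with `u' = √s J₀(s) - J₁(s)/(2√s)`; this follows from `J₀' = -J₁` and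
`J₁' = J₀ - J₁/t`, obtained by differentiating the integral representations under the integral
sign. For such an equation the energy `u² + u'²` has logarithmic derivative `O(1/s²)`, so it is
pinched between two positive constants on `[1, ∞)` (it is positive at `1` because `J₀(1) > 0`).
Since `(u u')' = u'² - (1 - 3/(4s²)) u² ≥ u'² - u²`, the integral `∫₁ᴺ (u'² - u²)` is bounded by
the boundary terms, hence `2 ∫₁ᴺ u² = ∫₁ᴺ (u² + u'²) - ∫₁ᴺ (u'² - u²)` grows linearly in `N`.
-/

open Set intervalIntegral

theorem hasDerivAt_intervalIntegral_of_norm_deriv_le {E : Type*} [NormedAddCommGroup E]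
    [NormedSpace ℝ E] {f f' : ℝ → ℝ → E} {a b C : ℝ}
    (hf : ∀ x, Continuous (f x)) (hf' : ∀ x, Continuous (f' x))
    (hderiv : ∀ x θ, HasDerivAt (fun x ↦ f x θ) (f' x θ) x) (hbound : ∀ x θ, ‖f' x θ‖ ≤ C)
    (t : ℝ) : HasDerivAt (fun x ↦ ∫ θ in a..b, f x θ) (∫ θ in a..b, f' t θ) t :=
  (hasDerivAt_integral_of_dominated_loc_of_deriv_le univ_mem
    (.of_forall fun x ↦ (hf x).aestronglyMeasurable) ((hf t).intervalIntegrable a b)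
    (hf' t).aestronglyMeasurable (.of_forall fun θ _ x _ ↦ hbound x θ)
    intervalIntegrable_const (.of_forall fun θ _ x _ ↦ hderiv x θ)).2

/- The reflection `θ ↦ π - θ` changes the sign of the integrand. -/
theorem integral_cos_mul_cos_mul_sin (t : ℝ) :
    ∫ θ in (0:ℝ)..π, cos θ * cos (t * sin θ) = 0 := by
  have h := integral_comp_sub_left (fun θ ↦ cos θ * cos (t * sin θ)) π (a := 0) (b := π)
  simp only [cos_pi_sub, sin_pi_sub, sub_zero, sub_self, neg_mul,
    intervalIntegral.integral_neg] at h
  linarith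

theorem integral_one_sub_mul_cos_mul_cos_sub (t : ℝ) :
    ∫ θ in (0:ℝ)..π, (1 - t * cos θ) * cos (θ - t * sin θ) = 0 := by
  have h : ∀ θ ∈ uIcc 0 π, HasDerivAt (fun θ ↦ sin (θ - t * sin θ))
      ((1 - t * cos θ) * cos (θ - t * sin θ)) θ := fun θ _ ↦ by
    simpa [mul_comm] using ((hasDerivAt_id θ).sub ((hasDerivAt_sin θ).const_mul t)).sin
  rw [integral_eq_sub_of_hasDerivAt h ((by fun_prop : Continuous _).intervalIntegrable _ _)]
  simp

noncomputable def besselJ0 (t : ℝ) : ℝ :=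
  (1 / π) * ∫ θ in (0:ℝ)..π, cos (t * sin θ)

theorem abs_sin_mul_sin_le_one (x y : ℝ) : |sin x * sin y| ≤ 1 := by
  simpa [abs_mul] using mul_le_one₀ (abs_sin_le_one x) (abs_nonneg _) (abs_sin_le_one y)

theorem hasDerivAt_besselJ1_integral (t : ℝ) :
    HasDerivAt besselJ1 ((1 / π) * ∫ θ in (0:ℝ)..π, sin θ * sin (θ - t * sin θ)) t := by
  refine (hasDerivAt_intervalIntegral_of_norm_deriv_le (C := 1)
    (f := fun x θ ↦ cos (θ - x * sin θ)) (f' := fun x θ ↦ sin θ * sin (θ - x * sin θ))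
    (by fun_prop) (by fun_prop) (fun x θ ↦ ?_) (fun x θ ↦ abs_sin_mul_sin_le_one _ _) t).const_mul
    (1 / π)
  simpa [mul_comm] using ((hasDerivAt_mul_const (sin θ)).const_sub θ).cos

theorem continuous_besselJ1 : Continuous besselJ1 :=
  continuous_iff_continuousAt.2 fun t ↦ (hasDerivAt_besselJ1_integral t).continuousAt

theorem mul_integral_sin_mul_sin_sub (t : ℝ) :
    t * ∫ θ in (0:ℝ)..π, sin θ * sin (θ - t * sin θ) =
      t * (∫ θ in (0:ℝ)..π, cos (t * sin θ)) - ∫ θ in (0:ℝ)..π, cos (θ - t * sin θ) := by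
  have h : ∀ θ, t * (sin θ * sin (θ - t * sin θ)) = t * cos (t * sin θ)
      - cos (θ - t * sin θ) + (1 - t * cos θ) * cos (θ - t * sin θ) := fun θ ↦ by
    have := cos_sub θ (θ - t * sin θ)
    rw [sub_sub_cancel] at this
    rw [this]; ring
  rw [← intervalIntegral.integral_const_mul, ← intervalIntegral.integral_const_mul,
    integral_congr fun θ _ ↦ h θ, intervalIntegral.integral_add, intervalIntegral.integral_sub,
    integral_one_sub_mul_cos_mul_cos_sub, add_zero] <;>
  exact (by fun_prop : Continuous _).intervalIntegrable _ _

theorem hasDerivAt_besselJ1 {t : ℝ} (ht : t ≠ 0) :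
    HasDerivAt besselJ1 (besselJ0 t - besselJ1 t / t) t := by
  convert hasDerivAt_besselJ1_integral t using 1
  rw [besselJ0, besselJ1]
  field_simp
  exact (mul_integral_sin_mul_sin_sub t).symm

theorem integral_sin_mul_sin_mul_sin (t : ℝ) :
    ∫ θ in (0:ℝ)..π, sin θ * sin (t * sin θ) = ∫ θ in (0:ℝ)..π, cos (θ - t * sin θ) := by
  simp_rw [cos_sub]
  rw [intervalIntegral.integral_add, integral_cos_mul_cos_mul_sin, zero_add] <;>
  exact (by fun_prop : Continuous _).intervalIntegrable _ _

theorem hasDerivAt_besselJ0 (t : ℝ) : HasDerivAt besselJ0 (-besselJ1 t) t := by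
  have h := (hasDerivAt_intervalIntegral_of_norm_deriv_le (a := 0) (b := π) (C := 1)
    (f := fun x θ ↦ cos (x * sin θ)) (f' := fun x θ ↦ -(sin θ * sin (x * sin θ)))
    (by fun_prop) (by fun_prop) (fun x θ ↦ ?_) (fun x θ ↦ ?_) t).const_mul (1 / π)
  · rwa [intervalIntegral.integral_neg, integral_sin_mul_sin_mul_sin, mul_neg] at h
  · simpa [mul_comm] using (hasDerivAt_mul_const (sin θ)).cos
  · simpa using abs_sin_mul_sin_le_one _ _

theorem besselJ0_one_pos : 0 < besselJ0 1 := by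
  refine mul_pos (by positivity) (intervalIntegral_pos_of_pos_on
    ((by fun_prop : Continuous _).intervalIntegrable _ _) (fun θ _ ↦ ?_) pi_pos)
  refine cos_pos_of_mem_Ioo ⟨?_, ?_⟩ <;> linarith [neg_one_le_sin θ, sin_le_one θ, pi_gt_three]

theorem antitoneOn_mul_exp_div {E E' : ℝ → ℝ} {a c : ℝ} (ha : 0 < a)
    (hE : ∀ x ∈ Ici a, HasDerivAt E (E' x) x) (hE' : ∀ x ∈ Ioi a, E' x ≤ c / x ^ 2 * E x) :
    AntitoneOn (fun x ↦ E x * exp (c / x)) (Ici a) := by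
  have hd : ∀ x ∈ Ici a, HasDerivAt (fun x ↦ E x * exp (c / x))
      (exp (c / x) * (E' x - c / x ^ 2 * E x)) x := fun x hx ↦ by
    have hx0 : x ≠ 0 := (ha.trans_le hx).ne'
    simp only [div_eq_mul_inv]
    exact ((hE x hx).mul ((hasDerivAt_inv hx0).const_mul c).exp).congr_deriv (by ring)
  refine antitoneOn_of_hasDerivWithinAt_nonpos
    (f' := fun x ↦ exp (c / x) * (E' x - c / x ^ 2 * E x)) (convex_Ici a)
    (fun x hx ↦ (hd x hx).continuousAt.continuousWithinAt) (fun x hx ↦ ?_) (fun x hx ↦ ?_) <;>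
  rw [interior_Ici] at hx
  · exact (hd x (mem_Ici.2 hx.le)).hasDerivWithinAt
  · exact mul_nonpos_of_nonneg_of_nonpos (exp_pos _).le (sub_nonpos.2 (hE' x hx))

theorem le_mul_exp_div_of_deriv_le {E E' : ℝ → ℝ} {a c : ℝ} (ha : 0 < a) (hc : 0 ≤ c)
    (hE : ∀ x ∈ Ici a, HasDerivAt E (E' x) x) (hE0 : ∀ x ∈ Ici a, 0 ≤ E x)
    (hE' : ∀ x ∈ Ioi a, E' x ≤ c / x ^ 2 * E x) {s : ℝ} (hs : a ≤ s) :
    E s ≤ E a * exp (c / a) :=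
  calc E s ≤ E s * exp (c / s) :=
        le_mul_of_one_le_right (hE0 s hs) (one_le_exp (div_nonneg hc (ha.le.trans hs)))
    _ ≤ E a * exp (c / a) := antitoneOn_mul_exp_div ha hE hE' self_mem_Ici hs hs

theorem mul_exp_neg_div_le_of_le_deriv {E E' : ℝ → ℝ} {a c : ℝ} (ha : 0 < a) (hc : 0 ≤ c)
    (hE : ∀ x ∈ Ici a, HasDerivAt E (E' x) x) (hE0 : ∀ x ∈ Ici a, 0 ≤ E x)
    (hE' : ∀ x ∈ Ioi a, -(c / x ^ 2 * E x) ≤ E' x) {s : ℝ} (hs : a ≤ s) :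
    E a * exp (-(c / a)) ≤ E s := by
  have hE'' : ∀ x ∈ Ioi a, (-E') x ≤ -c / x ^ 2 * (-E) x := fun x hx ↦ by
    rw [Pi.neg_apply, Pi.neg_apply, neg_div, neg_mul_neg]
    linarith [hE' x hx]
  have h := antitoneOn_mul_exp_div ha (fun x hx ↦ (hE x hx).neg) hE'' self_mem_Ici hs hs
  calc E a * exp (-(c / a)) ≤ E s * exp (-(c / s)) := by simpa [neg_div] using h
    _ ≤ E s := mul_le_of_le_one_right (hE0 s hs)
        (exp_le_one_iff.2 (neg_nonpos.2 (div_nonneg hc (ha.le.trans hs))))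

theorem abs_two_mul_mul_le_sq_add_sq (x y : ℝ) : |2 * (x * y)| ≤ x ^ 2 + y ^ 2 :=
  abs_le.2 ⟨by nlinarith [sq_nonneg (x + y)], by nlinarith [sq_nonneg (x - y)]⟩

section NormalForm

variable {u v q : ℝ → ℝ} {a c : ℝ}

theorem hasDerivAt_sq_add_sq {s : ℝ} (hu : HasDerivAt u (v s) s)
    (hv : HasDerivAt v (-(q s * u s)) s) :
    HasDerivAt (fun s ↦ u s ^ 2 + v s ^ 2) (2 * (u s * v s) * (1 - q s)) s :=
  ((hu.pow 2).add (hv.pow 2)).congr_deriv (by ring)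

theorem integral_sq_sub_sq_le {N : ℝ} (haN : a ≤ N)
    (hu : ∀ s ∈ Icc a N, HasDerivAt u (v s) s) (hv : ∀ s ∈ Icc a N, HasDerivAt v (-(q s * u s)) s)
    (hq : ∀ s ∈ Icc a N, q s ≤ 1) :
    ∫ s in a..N, (v s ^ 2 - u s ^ 2) ≤ u N * v N - u a * v a := by
  have hcu : ContinuousOn u (Icc a N) := fun s hs ↦ (hu s hs).continuousAt.continuousWithinAt
  have hcv : ContinuousOn v (Icc a N) := fun s hs ↦ (hv s hs).continuousAt.continuousWithinAt
  refine integral_le_sub_of_hasDeriv_right_of_le haN (hcu.mul hcv)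
    (fun s hs ↦
      ((hu s (Ioo_subset_Icc_self hs)).mul (hv s (Ioo_subset_Icc_self hs))).hasDerivWithinAt)
    ((hcv.pow 2).sub (hcu.pow 2)).integrableOn_Icc (fun s hs ↦ ?_)
  nlinarith [hq s (Ioo_subset_Icc_self hs), sq_nonneg (u s)]

theorem exists_pos_le_sq_add_sq_le (ha : 0 < a)
    (hu : ∀ s ∈ Ici a, HasDerivAt u (v s) s) (hv : ∀ s ∈ Ici a, HasDerivAt v (-(q s * u s)) s)
    (hq : ∀ s ∈ Ici a, q s ≤ 1) (hqc : ∀ s ∈ Ici a, 1 - q s ≤ c / s ^ 2)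
    (h0 : u a ≠ 0 ∨ v a ≠ 0) :
    ∃ c₀ > 0, ∃ C, ∀ s ∈ Ici a, c₀ ≤ u s ^ 2 + v s ^ 2 ∧ u s ^ 2 + v s ^ 2 ≤ C := by
  set E : ℝ → ℝ := fun s ↦ u s ^ 2 + v s ^ 2
  have hE : ∀ s ∈ Ici a, HasDerivAt E (2 * (u s * v s) * (1 - q s)) s := fun s hs ↦
    hasDerivAt_sq_add_sq (hu s hs) (hv s hs)
  have hE0 : ∀ s ∈ Ici a, 0 ≤ E s := fun s _ ↦ by positivity
  have hE' : ∀ s ∈ Ici a, |2 * (u s * v s) * (1 - q s)| ≤ c / s ^ 2 * E s := fun s hs ↦ by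
    rw [abs_mul, abs_of_nonneg (sub_nonneg.2 (hq s hs)), mul_comm]
    exact mul_le_mul (hqc s hs) (abs_two_mul_mul_le_sq_add_sq (u s) (v s)) (abs_nonneg _)
      ((sub_nonneg.2 (hq s hs)).trans (hqc s hs))
  have hc : 0 ≤ c := by
    have := (sub_nonneg.2 (hq a self_mem_Ici)).trans (hqc a self_mem_Ici)
    simpa using (le_div_iff₀ (by positivity)).1 this
  have hEa : 0 < E a := by rcases h0 with h | h <;> positivity
  refine ⟨E a * exp (-(c / a)), by positivity, E a * exp (c / a), fun s hs ↦ ⟨?_, ?_⟩⟩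
  · exact mul_exp_neg_div_le_of_le_deriv ha hc hE hE0
      (fun x hx ↦ neg_le_of_abs_le (hE' x (mem_Ici.2 hx.le))) hs
  · exact le_mul_exp_div_of_deriv_le ha hc hE hE0
      (fun x hx ↦ (le_abs_self _).trans (hE' x (mem_Ici.2 hx.le))) hs

theorem tendsto_integral_sq_of_hasDerivAt (ha : 0 < a)
    (hu : ∀ s ∈ Ici a, HasDerivAt u (v s) s) (hv : ∀ s ∈ Ici a, HasDerivAt v (-(q s * u s)) s)
    (hq : ∀ s ∈ Ici a, q s ≤ 1) (hqc : ∀ s ∈ Ici a, 1 - q s ≤ c / s ^ 2)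
    (h0 : u a ≠ 0 ∨ v a ≠ 0) :
    Tendsto (fun N ↦ ∫ s in a..N, u s ^ 2) atTop atTop := by
  obtain ⟨c₀, hc₀, C, hE⟩ := exists_pos_le_sq_add_sq_le ha hu hv hq hqc h0
  have key : ∀ N ≥ a, c₀ / 2 * N - (a * c₀ + C) / 2 ≤ ∫ s in a..N, u s ^ 2 := fun N hN ↦ by
    have hcu : ContinuousOn u (Icc a N) := fun s hs ↦ (hu s hs.1).continuousAt.continuousWithinAt
    have hcv : ContinuousOn v (Icc a N) := fun s hs ↦ (hv s hs.1).continuousAt.continuousWithinAt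
    have hEi : IntervalIntegrable (fun s ↦ u s ^ 2 + v s ^ 2) volume a N :=
      ((hcu.pow 2).add (hcv.pow 2)).intervalIntegrable_of_Icc hN
    have hφi : IntervalIntegrable (fun s ↦ v s ^ 2 - u s ^ 2) volume a N :=
      ((hcv.pow 2).sub (hcu.pow 2)).intervalIntegrable_of_Icc hN
    have hlow : (N - a) * c₀ ≤ ∫ s in a..N, (u s ^ 2 + v s ^ 2) := by
      simpa using integral_mono_on hN (intervalIntegrable_const (μ := volume)) hEi
        fun s hs ↦ (hE s hs.1).1
    have hup := integral_sq_sub_sq_le hN (fun s hs ↦ hu s hs.1) (fun s hs ↦ hv s hs.1)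
      fun s hs ↦ hq s hs.1
    have hdiff : ∫ s in a..N, (u s ^ 2 + v s ^ 2 - (v s ^ 2 - u s ^ 2)) =
        2 * ∫ s in a..N, u s ^ 2 := by
      rw [← intervalIntegral.integral_const_mul]
      exact integral_congr fun s _ ↦ by ring
    rw [intervalIntegral.integral_sub hEi hφi] at hdiff
    linarith [le_of_abs_le (abs_two_mul_mul_le_sq_add_sq (u N) (v N)),
      neg_le_of_abs_le (abs_two_mul_mul_le_sq_add_sq (u a) (v a)), (hE N hN).2,
      (hE a self_mem_Ici).2]
  refine tendsto_atTop_mono' _ (eventually_ge_atTop a |>.mono key) ?_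
  exact tendsto_atTop_add_const_right _ _ (tendsto_id.const_mul_atTop (by positivity))

end NormalForm

noncomputable def besselU (s : ℝ) : ℝ := √s * besselJ1 s

noncomputable def besselV (s : ℝ) : ℝ := √s * besselJ0 s - besselJ1 s / (2 * √s)

theorem hasDerivAt_besselU {s : ℝ} (hs : 0 < s) : HasDerivAt besselU (besselV s) s := by
  refine ((hasDerivAt_sqrt hs.ne').mul (hasDerivAt_besselJ1 hs.ne')).congr_deriv ?_
  have hss : √s * √s = s := mul_self_sqrt hs.le
  have : √s ≠ 0 := by positivity
  rw [besselV]
  field_simp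
  linear_combination (-2 * besselJ1 s) * hss

theorem hasDerivAt_besselV {s : ℝ} (hs : 0 < s) :
    HasDerivAt besselV (-((1 - 3 / (4 * s ^ 2)) * besselU s)) s := by
  have hsq := hasDerivAt_sqrt hs.ne'
  refine ((hsq.mul (hasDerivAt_besselJ0 s)).sub ((hasDerivAt_besselJ1 hs.ne').div
    (hsq.const_mul 2) (by positivity))).congr_deriv ?_
  have hss : √s * √s = s := mul_self_sqrt hs.le
  have : √s ≠ 0 := by positivity
  rw [besselU]
  field_simp
  linear_combination (besselJ1 s * (-12 * √s ^ 2 - 4 * s)) * hss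

theorem besselU_one_ne_zero_or_besselV_one_ne_zero : besselU 1 ≠ 0 ∨ besselV 1 ≠ 0 := by
  rw [besselU, besselV, sqrt_one, one_mul, one_mul, ← not_and_or]
  rintro ⟨hJ1, hV⟩
  rw [hJ1, zero_div, sub_zero] at hV
  exact besselJ0_one_pos.ne' hV

/-- `∫_0^N s J₁(s)² ds → +∞` as `N → ∞`. -/
theorem stmt_14 :
    Tendsto (fun N : ℝ => ∫ s in (0:ℝ)..N, s * (besselJ1 s) ^ 2) atTop atTop := by
  have hlim := tendsto_integral_sq_of_hasDerivAt (q := fun s ↦ 1 - 3 / (4 * s ^ 2)) (c := 3 / 4)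
    one_pos (fun s hs ↦ hasDerivAt_besselU (one_pos.trans_le hs))
    (fun s hs ↦ hasDerivAt_besselV (one_pos.trans_le hs))
    (fun s _ ↦ sub_le_self _ (by positivity)) (fun s _ ↦ le_of_eq (by ring))
    besselU_one_ne_zero_or_besselV_one_ne_zero
  have hcont : Continuous fun s ↦ s * besselJ1 s ^ 2 :=
    continuous_id.mul (continuous_besselJ1.pow 2)
  refine (tendsto_atTop_add_const_left _ (∫ s in (0:ℝ)..1, s * besselJ1 s ^ 2) hlim).congr' ?_
  filter_upwards [eventually_ge_atTop 1] with N hN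
  rw [← integral_add_adjacent_intervals (hcont.intervalIntegrable 0 1)
    (hcont.intervalIntegrable 1 N)]
  refine congrArg _ (integral_congr fun s hs ↦ ?_)
  rw [uIcc_of_le hN] at hs
  simp only [besselU, mul_pow, sq_sqrt (zero_le_one.trans hs.1)]
end

section
/- The integral ∫_{B_1 × B_1} dx dy / (|x| · |y| · |x − y|) over pairs (x,y) of points of the closed unit ball in ℝ² is finite. -/
open Real MeasureTheory Metric Set

noncomputable section
namespace Stmt16Aux

lemma rpow_neg_three_halves {t : ℝ} (ht : 0 < t) :
    t ^ (-(3/2) : ℝ) = (t * Real.sqrt t)⁻¹ := by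
  rw [Real.rpow_neg ht.le, show (3/2:ℝ) = 1 + 1/2 by norm_num, Real.rpow_add ht,
    Real.rpow_one, ← Real.sqrt_eq_rpow]

lemma cover {t : ℝ} (ht : 0 < t) (ht2 : t ≤ 2) :
    ∃ n : ℕ, (1/2:ℝ)^n < t ∧ t ≤ 2 * (1/2:ℝ)^n := by
  obtain ⟨m, hm⟩ := exists_pow_lt_of_lt_one ht (by norm_num : (1/2:ℝ) < 1)
  have hP : ∃ n, (1/2:ℝ)^n < t := ⟨m, hm⟩
  refine ⟨Nat.find hP, Nat.find_spec hP, ?_⟩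
  rcases Nat.eq_zero_or_pos (Nat.find hP) with h0 | hpos
  · rw [h0]; simpa using ht2
  · have hle := Nat.find_min hP (Nat.sub_lt hpos one_pos)
    push_neg at hle
    obtain ⟨k, hk⟩ : ∃ k, Nat.find hP = k + 1 := ⟨Nat.find hP - 1, (Nat.succ_pred_eq_of_pos hpos).symm⟩
    have hk' : Nat.find hP - 1 = k := by omega
    rw [hk' ] at hle
    rw [hk, pow_succ]
    calc t ≤ (1/2:ℝ)^k := hle
      _ = 2 * ((1/2:ℝ)^k * (1/2)) := by ring

lemma rpow_ball_int :
    IntegrableOn (fun x : EuclideanSpace ℝ (Fin 2) => ‖x‖ ^ (-(3/2) : ℝ))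
      (Metric.closedBall (0 : EuclideanSpace ℝ (Fin 2)) 2) := by
  set q : ℝ := Real.sqrt (1/2) with hq
  have hq0 : 0 < q := Real.sqrt_pos.2 (by norm_num)
  have hq1 : q < 1 := by
    rw [show (1:ℝ) = Real.sqrt 1 by simp]
    exact Real.sqrt_lt_sqrt (by norm_num) (by norm_num)
  have hq2 : q ^ 2 = 1/2 := Real.sq_sqrt (by norm_num)
  set A : ℕ → Set (EuclideanSpace ℝ (Fin 2)) :=
    fun n => {x | (1/2:ℝ)^n < ‖x‖ ∧ ‖x‖ ≤ 2 * (1/2:ℝ)^n} with hA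
  constructor
  · exact (measurable_norm.pow_const _).aestronglyMeasurable
  · rw [hasFiniteIntegral_iff_norm]
    set B := volume (Metric.ball (0 : EuclideanSpace ℝ (Fin 2)) 1) with hB
    have hBfin : B < ⊤ := measure_ball_lt_top
    have hsub : Metric.closedBall (0 : EuclideanSpace ℝ (Fin 2)) 2 ⊆ {0} ∪ ⋃ n, A n := by
      intro x hx
      rcases eq_or_ne x 0 with rfl | hx0
      · exact Or.inl rfl
      · refine Or.inr (Set.mem_iUnion.2 ?_)
        obtain ⟨n, h1, h2⟩ := cover (norm_pos_iff.2 hx0) (mem_closedBall_zero_iff.1 hx)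
        exact ⟨n, h1, h2⟩
    have bound : ∀ n : ℕ, (∫⁻ x in A n, ENNReal.ofReal ‖(‖x‖ : ℝ) ^ (-(3/2):ℝ)‖) ≤
        ENNReal.ofReal (4 * q ^ n) * B := by
      intro n
      have hr : (0:ℝ) < (1/2:ℝ)^n := by positivity
      calc (∫⁻ x in A n, ENNReal.ofReal ‖(‖x‖ : ℝ) ^ (-(3/2):ℝ)‖)
          ≤ ∫⁻ _x in A n, ENNReal.ofReal (((1/2:ℝ)^n) ^ (-(3/2):ℝ)) := by
            apply setLIntegral_mono measurable_const
            intro x hx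
            apply ENNReal.ofReal_le_ofReal
            rw [Real.norm_eq_abs, abs_of_nonneg (Real.rpow_nonneg (norm_nonneg _) _)]
            exact Real.rpow_le_rpow_of_nonpos hr hx.1.le (by norm_num)
        _ = ENNReal.ofReal (((1/2:ℝ)^n) ^ (-(3/2):ℝ)) * volume (A n) := setLIntegral_const _ _
        _ ≤ ENNReal.ofReal (((1/2:ℝ)^n) ^ (-(3/2):ℝ)) *
              (ENNReal.ofReal ((2 * (1/2:ℝ)^n) ^ Module.finrank ℝ (EuclideanSpace ℝ (Fin 2))) * B) := by
            apply mul_le_mul_right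
            rw [hB, ← Measure.addHaar_closedBall volume (0 : EuclideanSpace ℝ (Fin 2))
              (by positivity : (0:ℝ) ≤ 2 * (1/2:ℝ)^n)]
            apply measure_mono
            intro x hx
            exact mem_closedBall_zero_iff.2 hx.2
        _ = ENNReal.ofReal (4 * q ^ n) * B := by
            rw [← mul_assoc, ← ENNReal.ofReal_mul (Real.rpow_nonneg hr.le _)]
            congr 2
            have h12 : (1/2:ℝ)^n = q^(2*n) := by
              rw [pow_mul, hq2]
            have hsq : Real.sqrt ((1/2:ℝ)^n) = q^n := by
              rw [h12, show 2*n = n*2 by ring, pow_mul, Real.sqrt_sq (by positivity)]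
            have h12' : (1/2:ℝ)^n = q^n * q^n := by rw [h12, ← pow_add]; congr 1; ring
            rw [rpow_neg_three_halves hr, hsq, finrank_euclideanSpace_fin, h12']
            have hqn : q^n ≠ 0 := by positivity
            field_simp
            ring
    calc (∫⁻ x in Metric.closedBall (0 : EuclideanSpace ℝ (Fin 2)) 2,
            ENNReal.ofReal ‖(‖x‖ : ℝ) ^ (-(3/2):ℝ)‖)
        ≤ ∫⁻ x in ({0} ∪ ⋃ n, A n), ENNReal.ofReal ‖(‖x‖ : ℝ) ^ (-(3/2):ℝ)‖ :=
          lintegral_mono_set hsub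
      _ ≤ (∫⁻ x in ({0} : Set (EuclideanSpace ℝ (Fin 2))), ENNReal.ofReal ‖(‖x‖:ℝ) ^ (-(3/2):ℝ)‖)
            + ∫⁻ x in (⋃ n, A n), ENNReal.ofReal ‖(‖x‖:ℝ) ^ (-(3/2):ℝ)‖ := lintegral_union_le _ _ _
      _ ≤ 0 + ∑' n, ∫⁻ x in A n, ENNReal.ofReal ‖(‖x‖:ℝ) ^ (-(3/2):ℝ)‖ := by
          apply add_le_add
          · rw [setLIntegral_measure_zero _ _ (measure_singleton 0)]
          · exact lintegral_iUnion_le _ _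
      _ ≤ 0 + ∑' n, ENNReal.ofReal (4 * q ^ n) * B := by
          exact add_le_add le_rfl (ENNReal.tsum_le_tsum bound)
      _ < ⊤ := by
          rw [zero_add]
          have heq : ∀ n : ℕ, ENNReal.ofReal (4 * q ^ n) * B
              = (ENNReal.ofReal 4 * B) * (ENNReal.ofReal q) ^ n := by
            intro n
            rw [ENNReal.ofReal_mul (by norm_num), ENNReal.ofReal_pow hq0.le]
            ring
          simp_rw [heq]
          rw [ENNReal.tsum_mul_left, ENNReal.tsum_geometric]
          apply ENNReal.mul_lt_top
          · exact ENNReal.mul_lt_top ENNReal.ofReal_lt_top hBfin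
          · rw [ENNReal.inv_lt_top, tsub_pos_iff_lt]
            exact ENNReal.ofReal_lt_one.2 hq1


lemma core (a b c : ℝ) (ha : 0 ≤ a) (hb : 0 ≤ b) (hc : 0 ≤ c) (hcab : c ≤ a + b) :
    ‖1 / (a * b * c)‖ ≤
      Real.sqrt 2 * (a ^ (-(3/2):ℝ) * c ^ (-(3/2):ℝ) + b ^ (-(3/2):ℝ) * c ^ (-(3/2):ℝ)) := by
  have hR : 0 ≤ Real.sqrt 2 *
      (a ^ (-(3/2):ℝ) * c ^ (-(3/2):ℝ) + b ^ (-(3/2):ℝ) * c ^ (-(3/2):ℝ)) :=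
    mul_nonneg (Real.sqrt_nonneg _) (add_nonneg
      (mul_nonneg (Real.rpow_nonneg ha _) (Real.rpow_nonneg hc _))
      (mul_nonneg (Real.rpow_nonneg hb _) (Real.rpow_nonneg hc _)))
  rcases eq_or_ne (a * b * c) 0 with h0 | h0
  · simp [h0, hR]
  have ha' : 0 < a := lt_of_le_of_ne ha (by rintro rfl; simp at h0)
  have hb' : 0 < b := lt_of_le_of_ne hb (by rintro rfl; simp at h0)
  have hc' : 0 < c := lt_of_le_of_ne hc (by rintro rfl; simp at h0)
  have key : ∀ u v : ℝ, 0 < u → 0 < v → u * c ≤ 2 * v ^ 2 →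
      1 / (u * v * c) ≤ Real.sqrt 2 * (u ^ (-(3/2):ℝ) * c ^ (-(3/2):ℝ)) := by
    intro u v hu hv huv
    have hs : 0 < u * c := mul_pos hu hc'
    rw [← Real.mul_rpow hu.le hc'.le, rpow_neg_three_halves hs]
    have hsq : Real.sqrt (u * c) ≤ Real.sqrt 2 * v := by
      have := Real.sqrt_le_sqrt huv
      rwa [Real.sqrt_mul (by norm_num) (v ^ 2), Real.sqrt_sq hv.le] at this
    rw [← div_eq_mul_inv, div_le_div_iff₀ (by positivity) (by positivity)]
    have h1 : (u * c) * Real.sqrt (u * c) ≤ (u * c) * (Real.sqrt 2 * v) :=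
      mul_le_mul_of_nonneg_left hsq hs.le
    nlinarith [Real.sqrt_nonneg (u * c), hs]
  have hnorm : ‖1 / (a * b * c)‖ = 1 / (a * b * c) := by
    rw [Real.norm_eq_abs, abs_of_nonneg (by positivity)]
  rw [hnorm]
  rcases le_total a b with hab | hab
  · calc 1 / (a * b * c) ≤ Real.sqrt 2 * (a ^ (-(3/2):ℝ) * c ^ (-(3/2):ℝ)) := by
          apply key a b ha' hb'; nlinarith
      _ ≤ _ := by
          apply mul_le_mul_of_nonneg_left _ (Real.sqrt_nonneg _)
          exact le_add_of_nonneg_right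
            (mul_nonneg (Real.rpow_nonneg hb _) (Real.rpow_nonneg hc _))
  · have : 1 / (a * b * c) = 1 / (b * a * c) := by ring_nf
    rw [this]
    calc 1 / (b * a * c) ≤ Real.sqrt 2 * (b ^ (-(3/2):ℝ) * c ^ (-(3/2):ℝ)) := by
          apply key b a hb' ha'; nlinarith
      _ ≤ _ := by
          apply mul_le_mul_of_nonneg_left _ (Real.sqrt_nonneg _)
          exact le_add_of_nonneg_left
            (mul_nonneg (Real.rpow_nonneg ha _) (Real.rpow_nonneg hc _))


def hfun : EuclideanSpace ℝ (Fin 2) → ℝ :=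
  (Metric.closedBall (0 : EuclideanSpace ℝ (Fin 2)) 2).indicator
    (fun z => ‖z‖ ^ (-(3/2) : ℝ))

lemma hfun_meas : Measurable hfun :=
  (measurable_norm.pow_const _).indicator measurableSet_closedBall

lemma hfun_int : Integrable hfun :=
  (integrable_indicator_iff measurableSet_closedBall).2 rpow_ball_int

lemma hfun_neg (z : EuclideanSpace ℝ (Fin 2)) : hfun (-z) = hfun z := by
  unfold hfun
  simp [Set.indicator, Metric.mem_closedBall, dist_zero_right, norm_neg]

lemma hfun_of_mem {z : EuclideanSpace ℝ (Fin 2)} (hz : ‖z‖ ≤ 2) :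
    hfun z = ‖z‖ ^ (-(3/2) : ℝ) :=
  Set.indicator_of_mem (mem_closedBall_zero_iff.2 hz) _

lemma prod_int : Integrable
    (fun q : EuclideanSpace ℝ (Fin 2) × EuclideanSpace ℝ (Fin 2) => hfun q.1 * hfun q.2)
    (volume.prod volume) :=
  hfun_int.mul_prod hfun_int

lemma prod_meas : AEStronglyMeasurable
    (fun q : EuclideanSpace ℝ (Fin 2) × EuclideanSpace ℝ (Fin 2) => hfun q.1 * hfun q.2)
    (volume.prod volume) :=
  ((hfun_meas.comp measurable_fst).mul (hfun_meas.comp measurable_snd)).aestronglyMeasurable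

lemma G1_int : Integrable
    (fun p : EuclideanSpace ℝ (Fin 2) × EuclideanSpace ℝ (Fin 2) =>
      hfun p.1 * hfun (p.1 - p.2)) (volume.prod volume) := by
  have mp := measurePreserving_prod_sub (volume : Measure (EuclideanSpace ℝ (Fin 2))) volume
  have := (mp.integrable_comp prod_meas).2 prod_int
  have heq : ((fun q : EuclideanSpace ℝ (Fin 2) × EuclideanSpace ℝ (Fin 2) =>
      hfun q.1 * hfun q.2) ∘ (fun z : EuclideanSpace ℝ (Fin 2) × EuclideanSpace ℝ (Fin 2) =>
        (z.1, z.2 - z.1)))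
      = fun p => hfun p.1 * hfun (p.1 - p.2) := by
    funext p
    simp only [Function.comp_apply]
    rw [show p.1 - p.2 = -(p.2 - p.1) by abel, hfun_neg]
  rwa [heq] at this

lemma G2_int : Integrable
    (fun p : EuclideanSpace ℝ (Fin 2) × EuclideanSpace ℝ (Fin 2) =>
      hfun p.2 * hfun (p.1 - p.2)) (volume.prod volume) := by
  have mp := measurePreserving_prod_sub_swap (volume : Measure (EuclideanSpace ℝ (Fin 2))) volume
  have := (mp.integrable_comp prod_meas).2 prod_int
  exact this

end Stmt16Aux

open Stmt16Aux in
/-- Convergence of the triangular diagram integral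
`∫_{B₁×B₁} dx dy / (|x||y||x−y|)`. -/
theorem stmt_16 :
    IntegrableOn
      (fun p : EuclideanSpace ℝ (Fin 2) × EuclideanSpace ℝ (Fin 2) =>
        1 / (‖p.1‖ * ‖p.2‖ * ‖p.1 - p.2‖))
      (Metric.closedBall (0 : EuclideanSpace ℝ (Fin 2)) 1 ×ˢ
        Metric.closedBall (0 : EuclideanSpace ℝ (Fin 2)) 1) := by
  have hg : Integrable (fun p : EuclideanSpace ℝ (Fin 2) × EuclideanSpace ℝ (Fin 2) =>
      Real.sqrt 2 * (hfun p.1 * hfun (p.1 - p.2) + hfun p.2 * hfun (p.1 - p.2)))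
      (volume : Measure (EuclideanSpace ℝ (Fin 2) × EuclideanSpace ℝ (Fin 2))) := by
    rw [Measure.volume_eq_prod]
    exact (G1_int.add G2_int).const_mul _
  apply Integrable.mono' (hg.integrableOn)
  · exact (measurable_const.div (((measurable_fst.norm).mul (measurable_snd.norm)).mul
      ((measurable_fst.sub measurable_snd).norm))).aestronglyMeasurable
  · filter_upwards [ae_restrict_mem (measurableSet_closedBall.prod measurableSet_closedBall)]
      with p hp
    obtain ⟨hp1, hp2⟩ := hp
    have hx1 : ‖p.1‖ ≤ 1 := mem_closedBall_zero_iff.1 hp1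
    have hy1 : ‖p.2‖ ≤ 1 := mem_closedBall_zero_iff.1 hp2
    have hxy : ‖p.1 - p.2‖ ≤ 2 := by
      calc ‖p.1 - p.2‖ ≤ ‖p.1‖ + ‖p.2‖ := norm_sub_le _ _
        _ ≤ 2 := by linarith
    rw [hfun_of_mem (le_trans hx1 one_le_two), hfun_of_mem (le_trans hy1 one_le_two),
      hfun_of_mem hxy]
    exact core ‖p.1‖ ‖p.2‖ ‖p.1 - p.2‖ (norm_nonneg _) (norm_nonneg _) (norm_nonneg _)
      (norm_sub_le _ _)
end
end

section
/- The integral ∫_{B_1 × B_1 × B_1} dx dy dz · |ln|x−z|| · |ln|y|| / (|x| · |z| · |x−y| · |y−z|) over triples of points of the closed unit ball in ℝ² is finite. -/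
/-!
Since `|log r| ≤ 4 r^(-1/4)` on `[0, 2]` and `|x - z| ≤ |x - y| + |y - z|`, the integrand is at
most `16 |x|⁻¹ |z|⁻¹ |x - z|^(-5/4) · |y|^(-1/4) (|x - y|⁻¹ + |z - y|⁻¹)`.
The `y`-integral of the last factor is bounded uniformly in `x, z`: Young's inequality splits
`|y|^(-s) |w - y|^(-t)` into two locally integrable powers as soon as `s + t` is below the
dimension. In the remaining double integral, whichever of `|z|`, `|x - z|` is the larger is at
least `|x| / 2`, so part of its singularity can be traded for a power of `|x|`; this leaves a
uniformly bounded `z`-integral times the integrable `|x|^(-1-α)`.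
-/

open Real MeasureTheory Metric Set Module
open scoped ENNReal

lemma rpow_neg_mul_rpow_neg_le_add {a b s t θ : ℝ} (ha : 0 ≤ a) (hb : 0 ≤ b) (hθ₀ : 0 < θ)
    (hθ₁ : θ < 1) : a ^ (-s) * b ^ (-t) ≤ a ^ (-(s / θ)) + b ^ (-(t / (1 - θ))) := by
  have hA : 0 ≤ a ^ (-(s / θ)) := rpow_nonneg ha _
  have hB : 0 ≤ b ^ (-(t / (1 - θ))) := rpow_nonneg hb _
  calc a ^ (-s) * b ^ (-t) = (a ^ (-(s / θ))) ^ θ * (b ^ (-(t / (1 - θ)))) ^ (1 - θ) := by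
        rw [← rpow_mul ha, ← rpow_mul hb]
        congr 2 <;> field_simp [(by linarith : (1 : ℝ) - θ ≠ 0)]
    _ ≤ θ * a ^ (-(s / θ)) + (1 - θ) * b ^ (-(t / (1 - θ))) :=
        geom_mean_le_arith_mean2_weighted hθ₀.le (by linarith) hA hB (by ring)
    _ ≤ a ^ (-(s / θ)) + b ^ (-(t / (1 - θ))) := by nlinarith

lemma rpow_neg_le_two_rpow_mul_rpow_neg_mul {q r c α : ℝ} (hq : 0 < q) (hqr : q ≤ 2 * r)
    (hα : 0 ≤ α) : r ^ (-c) ≤ 2 ^ α * q ^ (-α) * r ^ (-(c - α)) := by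
  have hr : 0 < r := by linarith
  have hhalf : r ^ (-α) ≤ 2 ^ α * q ^ (-α) :=
    calc r ^ (-α) ≤ (q / 2) ^ (-α) :=
          rpow_le_rpow_of_nonpos (by positivity) (by linarith) (by linarith)
      _ = 2 ^ α * q ^ (-α) := by
          rw [div_rpow hq.le zero_le_two, rpow_neg zero_le_two, div_inv_eq_mul, mul_comm]
  calc r ^ (-c) = r ^ (-α) * r ^ (-(c - α)) := by rw [← rpow_add hr]; ring_nf
    _ ≤ 2 ^ α * q ^ (-α) * r ^ (-(c - α)) := by gcongr

lemma norm_rpow_neg_mul_norm_sub_rpow_neg_le {E : Type*} [NormedAddCommGroup E] {x z : E}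
    (hx : x ≠ 0) {b c α : ℝ} (hα : 0 ≤ α) :
    ‖z‖ ^ (-b) * ‖x - z‖ ^ (-c) ≤ 2 ^ α * ‖x‖ ^ (-α) *
      (‖z‖ ^ (-b) * ‖x - z‖ ^ (-(c - α)) + ‖z‖ ^ (-(b - α)) * ‖x - z‖ ^ (-c)) := by
  have hx₀ : 0 < ‖x‖ := norm_pos_iff.2 hx
  have htri : ‖x‖ ≤ ‖z‖ + ‖x - z‖ := norm_le_insert' x z
  rcases le_total ‖z‖ ‖x - z‖ with h | h
  · calc ‖z‖ ^ (-b) * ‖x - z‖ ^ (-c)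
        ≤ ‖z‖ ^ (-b) * (2 ^ α * ‖x‖ ^ (-α) * ‖x - z‖ ^ (-(c - α))) := by
          gcongr
          exact rpow_neg_le_two_rpow_mul_rpow_neg_mul hx₀ (by linarith) hα
      _ ≤ _ := by
          rw [mul_add]
          nlinarith [show 0 ≤ 2 ^ α * ‖x‖ ^ (-α) * (‖z‖ ^ (-(b - α)) * ‖x - z‖ ^ (-c)) by
            positivity]
  · calc ‖z‖ ^ (-b) * ‖x - z‖ ^ (-c)
        ≤ (2 ^ α * ‖x‖ ^ (-α) * ‖z‖ ^ (-(b - α))) * ‖x - z‖ ^ (-c) := by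
          gcongr
          exact rpow_neg_le_two_rpow_mul_rpow_neg_mul hx₀ (by linarith) hα
      _ ≤ _ := by
          rw [mul_add]
          nlinarith [show 0 ≤ 2 ^ α * ‖x‖ ^ (-α) * (‖z‖ ^ (-b) * ‖x - z‖ ^ (-(c - α))) by
            positivity]

lemma abs_log_le_four_mul_rpow_neg {c : ℝ} (hc₀ : 0 ≤ c) (hc₂ : c ≤ 2) :
    |log c| ≤ 4 * c ^ (-(1 / 4 : ℝ)) := by
  rcases hc₀.eq_or_lt with rfl | hc₀
  · simp
  rcases le_total c 1 with hc₁ | hc₁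
  · have h := abs_log_mul_self_rpow_lt c (1 / 4) hc₀ hc₁ (by norm_num)
    have hq : 0 < c ^ (1 / 4 : ℝ) := rpow_pos_of_pos hc₀ _
    rw [abs_mul, abs_of_pos hq] at h
    rw [rpow_neg hc₀.le, ← div_eq_mul_inv, le_div_iff₀ hq]
    linarith
  · have hlog : |log c| ≤ 1 := by
      rw [abs_of_nonneg (log_nonneg hc₁)]
      linarith [log_le_sub_one_of_pos hc₀]
    have hpow : c ^ (-1 : ℝ) ≤ c ^ (-(1 / 4 : ℝ)) :=
      rpow_le_rpow_of_exponent_le hc₁ (by norm_num)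
    have hinv : 2⁻¹ ≤ c ^ (-1 : ℝ) := by
      rw [rpow_neg_one]; exact inv_anti₀ hc₀ hc₂
    linarith

lemma inv_mul_inv_mul_le_inv_add_inv {a b c : ℝ} (ha : 0 ≤ a) (hb : 0 ≤ b) (h : c ≤ a + b) :
    c * (a⁻¹ * b⁻¹) ≤ a⁻¹ + b⁻¹ :=
  calc c * (a⁻¹ * b⁻¹) ≤ (a + b) * (a⁻¹ * b⁻¹) := by gcongr
    _ = a * a⁻¹ * b⁻¹ + b * b⁻¹ * a⁻¹ := by ring
    _ ≤ 1 * b⁻¹ + 1 * a⁻¹ := by gcongr <;> exact mul_inv_le_one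
    _ = a⁻¹ + b⁻¹ := by ring

lemma rpow_neg_mul_inv_mul_inv_le {a b c s : ℝ} (ha : 0 ≤ a) (hb : 0 ≤ b) (hc : 0 ≤ c)
    (hs : 0 < s) (h : c ≤ a + b) :
    c ^ (-s) * (a⁻¹ * b⁻¹) ≤ c ^ (-(s + 1)) * (a⁻¹ + b⁻¹) := by
  rcases hc.eq_or_lt with rfl | hc
  · rw [zero_rpow (by linarith), zero_mul]; positivity
  calc c ^ (-s) * (a⁻¹ * b⁻¹) = c ^ (-(s + 1)) * c * (a⁻¹ * b⁻¹) := by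
        rw [← rpow_add_one hc.ne']; ring_nf
    _ = c ^ (-(s + 1)) * (c * (a⁻¹ * b⁻¹)) := mul_assoc _ _ _
    _ ≤ c ^ (-(s + 1)) * (a⁻¹ + b⁻¹) := by gcongr; exact inv_mul_inv_mul_le_inv_add_inv ha hb h

lemma abs_log_norm_mul_abs_log_norm_div_le {E : Type*} [NormedAddCommGroup E] {x y z : E}
    (hx : ‖x‖ ≤ 1) (hy : ‖y‖ ≤ 1) (hz : ‖z‖ ≤ 1) :
    |log ‖x - z‖| * |log ‖y‖| / (‖x‖ * ‖z‖ * ‖x - y‖ * ‖y - z‖) ≤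
      16 * (‖x‖ ^ (-1 : ℝ) * (‖z‖ ^ (-1 : ℝ) * ‖x - z‖ ^ (-(5 / 4 : ℝ))) *
        (‖y‖ ^ (-(1 / 4 : ℝ)) * ‖x - y‖ ^ (-1 : ℝ) +
          ‖y‖ ^ (-(1 / 4 : ℝ)) * ‖z - y‖ ^ (-1 : ℝ))) := by
  have hlog₁ := abs_log_le_four_mul_rpow_neg (norm_nonneg (x - z))
    ((norm_sub_le x z).trans (by linarith))
  have hlog₂ := abs_log_le_four_mul_rpow_neg (norm_nonneg y) (by linarith)
  have htri : ‖x - z‖ ≤ ‖x - y‖ + ‖y - z‖ := norm_sub_le_norm_sub_add_norm_sub x y z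
  have hsplit : ‖x - z‖ ^ (-(1 / 4 : ℝ)) * (‖x - y‖⁻¹ * ‖y - z‖⁻¹) ≤
      ‖x - z‖ ^ (-(5 / 4 : ℝ)) * (‖x - y‖⁻¹ + ‖y - z‖⁻¹) := by
    convert rpow_neg_mul_inv_mul_inv_le (norm_nonneg _) (norm_nonneg _) (norm_nonneg _)
      (by norm_num : (0 : ℝ) < 1 / 4) htri using 3
    norm_num
  simp only [rpow_neg_one, norm_sub_rev z y]
  calc |log ‖x - z‖| * |log ‖y‖| / (‖x‖ * ‖z‖ * ‖x - y‖ * ‖y - z‖)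
      = |log ‖x - z‖| * |log ‖y‖| * (‖x‖⁻¹ * ‖z‖⁻¹ * (‖x - y‖⁻¹ * ‖y - z‖⁻¹)) := by
        rw [div_eq_mul_inv, mul_inv, mul_inv, mul_inv]; ring
    _ ≤ 4 * ‖x - z‖ ^ (-(1 / 4 : ℝ)) * (4 * ‖y‖ ^ (-(1 / 4 : ℝ))) *
          (‖x‖⁻¹ * ‖z‖⁻¹ * (‖x - y‖⁻¹ * ‖y - z‖⁻¹)) := by gcongr
    _ = 16 * (‖x‖⁻¹ * ‖z‖⁻¹ * ‖y‖ ^ (-(1 / 4 : ℝ))) *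
          (‖x - z‖ ^ (-(1 / 4 : ℝ)) * (‖x - y‖⁻¹ * ‖y - z‖⁻¹)) := by ring
    _ ≤ 16 * (‖x‖⁻¹ * ‖z‖⁻¹ * ‖y‖ ^ (-(1 / 4 : ℝ))) *
          (‖x - z‖ ^ (-(5 / 4 : ℝ)) * (‖x - y‖⁻¹ + ‖y - z‖⁻¹)) := by gcongr
    _ = _ := by ring

lemma setLIntegral_prod_prod {α β γ : Type*} [MeasurableSpace α] [MeasurableSpace β]
    [MeasurableSpace γ] {μ : Measure α} {ν : Measure β} {ρ : Measure γ} [SFinite μ] [SFinite ν]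
    [SFinite ρ] {s : Set α} {t : Set β} {u : Set γ} {f : α × β × γ → ℝ≥0∞} (hf : Measurable f) :
    ∫⁻ p in s ×ˢ (t ×ˢ u), f p ∂μ.prod (ν.prod ρ) =
      ∫⁻ x in s, ∫⁻ z in u, ∫⁻ y in t, f (x, y, z) ∂ν ∂ρ ∂μ := by
  rw [← Measure.prod_restrict, ← Measure.prod_restrict, lintegral_prod _ hf.aemeasurable]
  exact lintegral_congr fun x ↦ lintegral_prod_symm' _ (hf.comp measurable_prodMk_left)

section HaarBall

variable {E : Type*} [NormedAddCommGroup E] [NormedSpace ℝ E] [FiniteDimensional ℝ E]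
  [MeasurableSpace E] [BorelSpace E] (μ : Measure E) [μ.IsAddHaarMeasure]

lemma setLIntegral_closedBall_norm_rpow_neg_lt_top (hd : 1 ≤ finrank ℝ E) {s : ℝ}
    (hs : s < finrank ℝ E) (R : ℝ) :
    ∫⁻ x in closedBall 0 R, ENNReal.ofReal (‖x‖ ^ (-s)) ∂μ < ⊤ := by
  have hloc : LocallyIntegrable (fun x : E ↦ ‖x‖ ^ (-s)) μ :=
    locallyIntegrable_of_norm_le_rpow (C := 1) hd hs
      (ae_of_all _ fun x ↦ by simp [abs_of_nonneg (rpow_nonneg (norm_nonneg x) _)])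
      (by fun_prop : Measurable fun x : E ↦ ‖x‖ ^ (-s)).aestronglyMeasurable
  exact (hloc.integrableOn_isCompact (isCompact_closedBall 0 R)).setLIntegral_lt_top

lemma setLIntegral_closedBall_comp_sub_le (f : E → ℝ≥0∞) {x : E} {r : ℝ} (hx : ‖x‖ ≤ r)
    (R : ℝ) :
    ∫⁻ y in closedBall 0 R, f (x - y) ∂μ ≤ ∫⁻ u in closedBall 0 (r + R), f u ∂μ := by
  calc ∫⁻ y in closedBall 0 R, f (x - y) ∂μ
      = ∫⁻ y in closedBall 0 R, (closedBall 0 (r + R)).indicator f (x - y) ∂μ := by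
        refine setLIntegral_congr_fun measurableSet_closedBall fun y hy ↦ ?_
        rw [indicator_of_mem]
        rw [mem_closedBall_zero_iff] at hy ⊢
        exact (norm_sub_le x y).trans (add_le_add hx hy)
    _ ≤ ∫⁻ y, (closedBall 0 (r + R)).indicator f (x - y) ∂μ := setLIntegral_le_lintegral _ _
    _ = ∫⁻ u in closedBall 0 (r + R), f u ∂μ := by
        rw [lintegral_sub_left_eq_self, lintegral_indicator measurableSet_closedBall]

lemma exists_setLIntegral_norm_rpow_mul_norm_sub_rpow_le {s t : ℝ} (hs : 0 ≤ s) (ht : 0 ≤ t)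
    (hst : s + t < finrank ℝ E) (R : ℝ) :
    ∃ C ≠ ⊤, ∀ x ∈ closedBall (0 : E) R,
      ∫⁻ y in closedBall 0 R, ENNReal.ofReal (‖y‖ ^ (-s) * ‖x - y‖ ^ (-t)) ∂μ ≤ C := by
  set d : ℝ := (finrank ℝ E : ℝ)
  have hd₀ : 0 < d := by linarith
  have hd : 1 ≤ finrank ℝ E := Nat.one_le_iff_ne_zero.2 fun h ↦ by simp [d, h] at hd₀
  set θ := (s + d - t) / (2 * d)
  have hθd : θ * d = (s + d - t) / 2 := by
    rw [div_mul_eq_mul_div, mul_div_mul_right _ _ hd₀.ne']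
  have hθ₀ : 0 < θ := div_pos (by linarith) (by positivity)
  have hθ₁ : θ < 1 := by rw [div_lt_one (by positivity)]; linarith
  have hs' : s / θ < d := by rw [div_lt_iff₀ hθ₀, mul_comm, hθd]; linarith
  have ht' : t / (1 - θ) < d := by
    rw [div_lt_iff₀ (by linarith), mul_sub, mul_one, mul_comm d θ, hθd]; linarith
  refine ⟨(∫⁻ y in closedBall 0 R, ENNReal.ofReal (‖y‖ ^ (-(s / θ))) ∂μ) +
      ∫⁻ u in closedBall 0 (R + R), ENNReal.ofReal (‖u‖ ^ (-(t / (1 - θ)))) ∂μ,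
    (ENNReal.add_lt_top.2 ⟨setLIntegral_closedBall_norm_rpow_neg_lt_top μ hd hs' R,
      setLIntegral_closedBall_norm_rpow_neg_lt_top μ hd ht' _⟩).ne, fun x hx ↦ ?_⟩
  calc ∫⁻ y in closedBall 0 R, ENNReal.ofReal (‖y‖ ^ (-s) * ‖x - y‖ ^ (-t)) ∂μ
      ≤ ∫⁻ y in closedBall 0 R, (ENNReal.ofReal (‖y‖ ^ (-(s / θ))) +
          ENNReal.ofReal (‖x - y‖ ^ (-(t / (1 - θ))))) ∂μ := by
        refine lintegral_mono fun y ↦ ?_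
        rw [← ENNReal.ofReal_add (by positivity) (by positivity)]
        exact ENNReal.ofReal_le_ofReal
          (rpow_neg_mul_rpow_neg_le_add (norm_nonneg _) (norm_nonneg _) hθ₀ hθ₁)
    _ = (∫⁻ y in closedBall 0 R, ENNReal.ofReal (‖y‖ ^ (-(s / θ))) ∂μ) +
          ∫⁻ y in closedBall 0 R, ENNReal.ofReal (‖x - y‖ ^ (-(t / (1 - θ)))) ∂μ :=
        lintegral_add_left (by fun_prop) _
    _ ≤ _ := add_le_add le_rfl <| setLIntegral_closedBall_comp_sub_le μ
        (fun u ↦ ENNReal.ofReal (‖u‖ ^ (-(t / (1 - θ))))) (mem_closedBall_zero_iff.1 hx) R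

lemma exists_setLIntegral_norm_rpow_mul_norm_sub_rpow_le_mul {b c α : ℝ} (hα : 0 ≤ α)
    (hαb : α ≤ b) (hαc : α ≤ c) (hbc : b + c - α < finrank ℝ E) (R : ℝ) :
    ∃ C ≠ ⊤, ∀ x ∈ closedBall (0 : E) R, x ≠ 0 →
      ∫⁻ z in closedBall 0 R, ENNReal.ofReal (‖z‖ ^ (-b) * ‖x - z‖ ^ (-c)) ∂μ ≤
        ENNReal.ofReal (2 ^ α * ‖x‖ ^ (-α)) * C := by
  obtain ⟨C₁, hC₁, h₁⟩ := exists_setLIntegral_norm_rpow_mul_norm_sub_rpow_le μ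
    (by linarith : 0 ≤ b) (by linarith : 0 ≤ c - α) (by linarith) R
  obtain ⟨C₂, hC₂, h₂⟩ := exists_setLIntegral_norm_rpow_mul_norm_sub_rpow_le μ
    (by linarith : 0 ≤ b - α) (by linarith : 0 ≤ c) (by linarith) R
  refine ⟨C₁ + C₂, ENNReal.add_ne_top.2 ⟨hC₁, hC₂⟩, fun x hx hx₀ ↦ ?_⟩
  calc ∫⁻ z in closedBall 0 R, ENNReal.ofReal (‖z‖ ^ (-b) * ‖x - z‖ ^ (-c)) ∂μ
      ≤ ∫⁻ z in closedBall 0 R, ENNReal.ofReal (2 ^ α * ‖x‖ ^ (-α)) *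
          (ENNReal.ofReal (‖z‖ ^ (-b) * ‖x - z‖ ^ (-(c - α))) +
            ENNReal.ofReal (‖z‖ ^ (-(b - α)) * ‖x - z‖ ^ (-c))) ∂μ := by
        refine lintegral_mono fun z ↦ ?_
        rw [← ENNReal.ofReal_add (by positivity) (by positivity),
          ← ENNReal.ofReal_mul (by positivity)]
        exact ENNReal.ofReal_le_ofReal (norm_rpow_neg_mul_norm_sub_rpow_neg_le hx₀ hα)
    _ = ENNReal.ofReal (2 ^ α * ‖x‖ ^ (-α)) *
          ((∫⁻ z in closedBall 0 R, ENNReal.ofReal (‖z‖ ^ (-b) * ‖x - z‖ ^ (-(c - α))) ∂μ) +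
            ∫⁻ z in closedBall 0 R, ENNReal.ofReal (‖z‖ ^ (-(b - α)) * ‖x - z‖ ^ (-c)) ∂μ) := by
        rw [lintegral_const_mul' _ _ ENNReal.ofReal_ne_top, lintegral_add_left (by fun_prop)]
    _ ≤ ENNReal.ofReal (2 ^ α * ‖x‖ ^ (-α)) * (C₁ + C₂) := by
        gcongr
        exacts [h₁ x hx, h₂ x hx]

lemma setLIntegral_setLIntegral_norm_rpow_mul_norm_sub_rpow_lt_top {a b c : ℝ} (hb : 0 ≤ b)
    (hc : 0 ≤ c) (ha' : a < finrank ℝ E) (hb' : b < finrank ℝ E) (hc' : c < finrank ℝ E)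
    (habc : a + b + c < 2 * finrank ℝ E) (R : ℝ) :
    ∫⁻ x in closedBall (0 : E) R, ∫⁻ z in closedBall 0 R,
      ENNReal.ofReal (‖x‖ ^ (-a) * (‖z‖ ^ (-b) * ‖x - z‖ ^ (-c))) ∂μ ∂μ < ⊤ := by
  have hd : 1 ≤ finrank ℝ E := Nat.one_le_iff_ne_zero.2 fun h ↦ by simp [h] at hb'; linarith
  -- any `α ∈ [0, min b c]` with `b + c - d < α < d - a` would do
  set α := max 0 (min (min b c) ((b + c - a) / 2))
  have hα : 0 ≤ α := le_max_left _ _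
  have hαb : α ≤ b := max_le hb ((min_le_left _ _).trans (min_le_left _ _))
  have hαc : α ≤ c := max_le hc ((min_le_left _ _).trans (min_le_right _ _))
  have hbc : b + c - α < finrank ℝ E := by
    have : b + c - finrank ℝ E < α :=
      lt_max_of_lt_right (lt_min (lt_min (by linarith) (by linarith)) (by linarith))
    linarith
  have haα : a + α < finrank ℝ E := by
    have : α < finrank ℝ E - a :=
      max_lt (by linarith) ((min_le_right _ _).trans_lt (by linarith))
    linarith
  have : Nontrivial E := Module.nontrivial_of_finrank_pos (R := ℝ) hd
  obtain ⟨C, hC, hCle⟩ :=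
    exists_setLIntegral_norm_rpow_mul_norm_sub_rpow_le_mul μ hα hαb hαc hbc R
  calc ∫⁻ x in closedBall (0 : E) R, ∫⁻ z in closedBall 0 R,
        ENNReal.ofReal (‖x‖ ^ (-a) * (‖z‖ ^ (-b) * ‖x - z‖ ^ (-c))) ∂μ ∂μ
      = ∫⁻ x in closedBall (0 : E) R, ENNReal.ofReal (‖x‖ ^ (-a)) *
          ∫⁻ z in closedBall 0 R, ENNReal.ofReal (‖z‖ ^ (-b) * ‖x - z‖ ^ (-c)) ∂μ ∂μ := by
        refine lintegral_congr fun x ↦ ?_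
        rw [← lintegral_const_mul' _ _ ENNReal.ofReal_ne_top]
        exact lintegral_congr fun z ↦ ENNReal.ofReal_mul (by positivity)
    _ ≤ ∫⁻ x in closedBall (0 : E) R,
          ENNReal.ofReal (2 ^ α) * ENNReal.ofReal (‖x‖ ^ (-(a + α))) * C ∂μ := by
        refine lintegral_mono_ae ?_
        filter_upwards [ae_restrict_mem measurableSet_closedBall,
          ae_restrict_of_ae (Measure.ae_ne μ 0)] with x hx hx₀
        have hxa : ‖x‖ ^ (-a) * (2 ^ α * ‖x‖ ^ (-α)) = 2 ^ α * ‖x‖ ^ (-(a + α)) := by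
          rw [mul_left_comm, ← rpow_add (norm_pos_iff.2 hx₀), neg_add]
        calc ENNReal.ofReal (‖x‖ ^ (-a)) *
              ∫⁻ z in closedBall 0 R, ENNReal.ofReal (‖z‖ ^ (-b) * ‖x - z‖ ^ (-c)) ∂μ
            ≤ ENNReal.ofReal (‖x‖ ^ (-a)) * (ENNReal.ofReal (2 ^ α * ‖x‖ ^ (-α)) * C) := by
              gcongr
              exact hCle x hx hx₀
          _ = ENNReal.ofReal (2 ^ α) * ENNReal.ofReal (‖x‖ ^ (-(a + α))) * C := by
              rw [← mul_assoc, ← ENNReal.ofReal_mul (by positivity), hxa,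
                ENNReal.ofReal_mul (by positivity)]
    _ = ENNReal.ofReal (2 ^ α) *
          (∫⁻ x in closedBall (0 : E) R, ENNReal.ofReal (‖x‖ ^ (-(a + α))) ∂μ) * C := by
        rw [lintegral_mul_const' _ _ hC, lintegral_const_mul' _ _ ENNReal.ofReal_ne_top]
    _ < ⊤ := ENNReal.mul_lt_top (ENNReal.mul_lt_top ENNReal.ofReal_lt_top
        (setLIntegral_closedBall_norm_rpow_neg_lt_top μ hd haα R)) hC.lt_top

lemma integrableOn_closedBall_triangle_majorant {a b c s t : ℝ} (hb : 0 ≤ b) (hc : 0 ≤ c)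
    (ha' : a < finrank ℝ E) (hb' : b < finrank ℝ E) (hc' : c < finrank ℝ E)
    (habc : a + b + c < 2 * finrank ℝ E) (hs : 0 ≤ s) (ht : 0 ≤ t)
    (hst : s + t < finrank ℝ E) (R : ℝ) :
    IntegrableOn (fun p : E × E × E ↦ ‖p.1‖ ^ (-a) * (‖p.2.2‖ ^ (-b) * ‖p.1 - p.2.2‖ ^ (-c)) *
        (‖p.2.1‖ ^ (-s) * ‖p.1 - p.2.1‖ ^ (-t) + ‖p.2.1‖ ^ (-s) * ‖p.2.2 - p.2.1‖ ^ (-t)))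
      (closedBall 0 R ×ˢ (closedBall 0 R ×ˢ closedBall 0 R)) (μ.prod (μ.prod μ)) := by
  obtain ⟨C, hC, hCle⟩ := exists_setLIntegral_norm_rpow_mul_norm_sub_rpow_le μ hs ht hst R
  have hinner : ∀ x ∈ closedBall (0 : E) R, ∀ z ∈ closedBall (0 : E) R,
      ∫⁻ y in closedBall 0 R, ENNReal.ofReal (‖x‖ ^ (-a) * (‖z‖ ^ (-b) * ‖x - z‖ ^ (-c)) *
        (‖y‖ ^ (-s) * ‖x - y‖ ^ (-t) + ‖y‖ ^ (-s) * ‖z - y‖ ^ (-t))) ∂μ ≤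
      ENNReal.ofReal (‖x‖ ^ (-a) * (‖z‖ ^ (-b) * ‖x - z‖ ^ (-c))) * (C + C) := by
    intro x hx z hz
    calc _ = ENNReal.ofReal (‖x‖ ^ (-a) * (‖z‖ ^ (-b) * ‖x - z‖ ^ (-c))) *
          ((∫⁻ y in closedBall 0 R, ENNReal.ofReal (‖y‖ ^ (-s) * ‖x - y‖ ^ (-t)) ∂μ) +
            ∫⁻ y in closedBall 0 R, ENNReal.ofReal (‖y‖ ^ (-s) * ‖z - y‖ ^ (-t)) ∂μ) := by
          rw [← lintegral_add_left (by fun_prop), ← lintegral_const_mul' _ _ ENNReal.ofReal_ne_top]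
          refine lintegral_congr fun y ↦ ?_
          rw [ENNReal.ofReal_mul (by positivity),
            ENNReal.ofReal_add (by positivity) (by positivity)]
      _ ≤ _ := by gcongr; exacts [hCle x hx, hCle z hz]
  refine ⟨(by fun_prop : Measurable _).aestronglyMeasurable, ?_⟩
  rw [hasFiniteIntegral_iff_ofReal (ae_of_all _ fun p ↦ by positivity),
    setLIntegral_prod_prod (by fun_prop)]
  calc _ ≤ ∫⁻ x in closedBall (0 : E) R, ∫⁻ z in closedBall 0 R,
          ENNReal.ofReal (‖x‖ ^ (-a) * (‖z‖ ^ (-b) * ‖x - z‖ ^ (-c))) * (C + C) ∂μ ∂μ :=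
        setLIntegral_mono' measurableSet_closedBall fun x hx ↦
          setLIntegral_mono' measurableSet_closedBall fun z hz ↦ hinner x hx z hz
    _ = (∫⁻ x in closedBall (0 : E) R, ∫⁻ z in closedBall 0 R,
          ENNReal.ofReal (‖x‖ ^ (-a) * (‖z‖ ^ (-b) * ‖x - z‖ ^ (-c))) ∂μ ∂μ) * (C + C) := by
        simp_rw [lintegral_mul_const' _ _ (ENNReal.add_ne_top.2 ⟨hC, hC⟩)]
    _ < ⊤ := ENNReal.mul_lt_top
        (setLIntegral_setLIntegral_norm_rpow_mul_norm_sub_rpow_lt_top μ hb hc ha' hb' hc' habc R)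
        (ENNReal.add_lt_top.2 ⟨hC.lt_top, hC.lt_top⟩)

end HaarBall

/-- Convergence of the second triangular diagram integral
`∫_{B₁³} |ln|x−z|| |ln|y|| / (|x||z||x−y||y−z|)`. -/
theorem stmt_17 :
    IntegrableOn
      (fun p : EuclideanSpace ℝ (Fin 2) ×
          (EuclideanSpace ℝ (Fin 2) × EuclideanSpace ℝ (Fin 2)) =>
        |Real.log ‖p.1 - p.2.2‖| * |Real.log ‖p.2.1‖| /
          (‖p.1‖ * ‖p.2.2‖ * ‖p.1 - p.2.1‖ * ‖p.2.1 - p.2.2‖))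
      (Metric.closedBall (0 : EuclideanSpace ℝ (Fin 2)) 1 ×ˢ
        (Metric.closedBall (0 : EuclideanSpace ℝ (Fin 2)) 1 ×ˢ
          Metric.closedBall (0 : EuclideanSpace ℝ (Fin 2)) 1)) := by
  have hd : (finrank ℝ (EuclideanSpace ℝ (Fin 2)) : ℝ) = 2 := by simp
  have hmaj := integrableOn_closedBall_triangle_majorant
    (volume : Measure (EuclideanSpace ℝ (Fin 2))) (a := 1) (b := 1) (c := 5 / 4) (s := 1 / 4)
    (t := 1) (by norm_num) (by norm_num) (by norm_num [hd]) (by norm_num [hd])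
    (by norm_num [hd]) (by norm_num [hd]) (by norm_num) (by norm_num) (by norm_num [hd]) 1
  refine (hmaj.const_mul 16).mono' (Measurable.aestronglyMeasurable (by fun_prop))
    (ae_restrict_of_forall_mem
      (measurableSet_closedBall.prod (measurableSet_closedBall.prod measurableSet_closedBall))
      fun p ⟨hx, hy, hz⟩ ↦ ?_)
  rw [norm_of_nonneg (by positivity)]
  exact abs_log_norm_mul_abs_log_norm_div_le (mem_closedBall_zero_iff.1 hx)
    (mem_closedBall_zero_iff.1 hy) (mem_closedBall_zero_iff.1 hz)
end
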